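/- arXiv:2409.02359 — 6 statements merged into one kernel-verified Lean document; each statement's English description precedes it below -/
import Mathlib

section
/- Let $A$ be the $(n+1)\times(n+1)$ integer matrix, with rows and columns indexed by $0,\ldots,n$, defined by $A_{ij} = (-1)^i \binom{n-i}{j}$. Then $A^3 = (-1)^n \cdot I$, where $I$ is the identity matrix. -/
open Polynomial Finset

lemma aux_L1 (n b : ℕ) (hb : b ≤ n) :
    (X : ℤ[X]) ^ b * (1 + X) ^ (n - b)
      = ∑ k ∈ range (n + 1), C ((-1 : ℤ) ^ k * (b.choose k)) * (1 + X) ^ (n - k) := by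
  have hext : ∑ k ∈ range (n + 1), C ((-1 : ℤ) ^ k * (b.choose k)) * (1 + X) ^ (n - k)
      = ∑ k ∈ range (b + 1), C ((-1 : ℤ) ^ k * (b.choose k)) * (1 + X) ^ (n - k) := by
    refine (Finset.sum_subset (Finset.range_subset_range.2 (by omega)) ?_).symm
    intro k _ hk2
    simp only [Finset.mem_range, not_lt] at hk2
    rw [Nat.choose_eq_zero_of_lt (by omega)]
    simp
  rw [hext]
  have h0 : (X : ℤ[X]) ^ b = ((1 + X) - 1) ^ b := by ring_nf
  rw [h0, sub_pow, ← Finset.sum_range_reflect, Finset.sum_mul]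
  apply Finset.sum_congr rfl
  intro k hk
  simp only [Finset.mem_range, Nat.add_sub_cancel] at hk ⊢
  rw [Nat.choose_symm (by omega : k ≤ b), one_pow, mul_one]
  have e1 : b - k + b = k + 2 * (b - k) := by omega
  have e2 : n - k = (b - k) + (n - b) := by omega
  rw [e1, pow_add, pow_mul, e2, pow_add]
  simp only [neg_one_sq, one_pow, mul_one, C_mul, C_pow, map_neg, C_1, Polynomial.C_eq_natCast]
  ring

lemma aux_L2 (n a : ℕ) (ha : a ≤ n) :
    ∑ j ∈ range (n + 1), C ((-1 : ℤ) ^ j * (a.choose j)) * ((X : ℤ[X]) ^ (n - j) * (1 + X) ^ j)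
      = C ((-1 : ℤ) ^ a) * X ^ (n - a) := by
  have hext : ∑ j ∈ range (n + 1), C ((-1 : ℤ) ^ j * (a.choose j)) * ((X : ℤ[X]) ^ (n - j) * (1 + X) ^ j)
      = ∑ j ∈ range (a + 1), C ((-1 : ℤ) ^ j * (a.choose j)) * ((X : ℤ[X]) ^ (n - j) * (1 + X) ^ j) := by
    refine (Finset.sum_subset (Finset.range_subset_range.2 (by omega)) ?_).symm
    intro k _ hk2
    simp only [Finset.mem_range, not_lt] at hk2
    rw [Nat.choose_eq_zero_of_lt (by omega)]
    simp
  rw [hext]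
  have h0 : (C ((-1 : ℤ) ^ a) : ℤ[X]) = ((X : ℤ[X]) - (1 + X)) ^ a := by
    have : ((X : ℤ[X]) - (1 + X)) = -1 := by ring
    rw [this]
    simp [C_pow]
  have key : ((X : ℤ[X]) - (1 + X)) ^ a * X ^ (n - a)
      = ∑ j ∈ range (a + 1), C ((-1 : ℤ) ^ j * (a.choose j)) * ((X : ℤ[X]) ^ (n - j) * (1 + X) ^ j) := by
    rw [sub_pow, ← Finset.sum_range_reflect, Finset.sum_mul]
    apply Finset.sum_congr rfl
    intro j hj
    simp only [Finset.mem_range, Nat.add_sub_cancel] at hj ⊢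
    rw [Nat.choose_symm (by omega : j ≤ a)]
    have e1 : a - j + a = j + 2 * (a - j) := by omega
    have e2 : n - j = (a - j) + (n - a) := by omega
    have e3 : a - (a - j) = j := by omega
    rw [e1, pow_add, pow_mul, e2, pow_add, e3]
    simp only [neg_one_sq, one_pow, mul_one, C_mul, C_pow, map_neg, C_1, Polynomial.C_eq_natCast]
    ring
  rw [h0, key]

/-- Wildon's lemma: the `(n+1) × (n+1)` integer matrix with entries
`A i j = (-1)^i * (n-i).choose j` satisfies `A^3 = (-1)^n • I`. -/
theorem stmt_0 (n : ℕ) (A : Matrix (Fin (n + 1)) (Fin (n + 1)) ℤ)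
    (hA : ∀ i j : Fin (n + 1), A i j = (-1 : ℤ) ^ (i : ℕ) * ((n - (i : ℕ)).choose (j : ℕ))) :
    A ^ 3 = (-1 : ℤ) ^ n • (1 : Matrix (Fin (n + 1)) (Fin (n + 1)) ℤ) := by
  have hA3 : A ^ 3 = A * A * A := by
    rw [pow_succ, pow_succ, pow_one]
  ext i l
  rw [hA3, Matrix.mul_apply]
  simp only [Matrix.mul_apply, Matrix.smul_apply, Matrix.one_apply, smul_eq_mul]
  have inner : ∀ j : Fin (n + 1), ∑ k : Fin (n + 1), A j k * A k l
      = (-1 : ℤ) ^ (j : ℕ) * ((X : ℤ[X]) ^ (n - (j : ℕ)) * (1 + X) ^ (j : ℕ)).coeff l := by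
    intro j
    have hL1 := congrArg (fun p => Polynomial.coeff p (l : ℕ)) (aux_L1 n (n - (j : ℕ)) (by omega))
    simp only [Polynomial.finset_sum_coeff, Polynomial.coeff_C_mul,
      Polynomial.coeff_one_add_X_pow] at hL1
    have hj : n - (n - (j : ℕ)) = (j : ℕ) := by omega
    rw [hj] at hL1
    have step1 : ∑ k : Fin (n + 1), A j k * A k l
        = ∑ k ∈ range (n + 1), (-1 : ℤ) ^ (j : ℕ) * ((-1 : ℤ) ^ k * ((n - (j : ℕ)).choose k) * ((n - k).choose (l : ℕ))) := by
      rw [← Fin.sum_univ_eq_sum_range (fun k => (-1 : ℤ) ^ (j : ℕ) * ((-1 : ℤ) ^ k * ((n - (j : ℕ)).choose k) * ((n - k).choose (l : ℕ)))) (n + 1)]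
      apply Finset.sum_congr rfl
      intro k _
      rw [hA, hA]
      ring
    rw [step1, ← Finset.mul_sum, hL1]
  have hL2 := congrArg (fun p => Polynomial.coeff p (l : ℕ)) (aux_L2 n (n - (i : ℕ)) (by omega))
  simp only [Polynomial.finset_sum_coeff, Polynomial.coeff_C_mul] at hL2
  have hi : n - (n - (i : ℕ)) = (i : ℕ) := by omega
  rw [hi] at hL2
  calc ∑ k : Fin (n + 1), (∑ j : Fin (n + 1), A i j * A j k) * A k l
      = ∑ j : Fin (n + 1), A i j * ∑ k : Fin (n + 1), A j k * A k l := by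
        simp only [Finset.sum_mul, Finset.mul_sum]
        rw [Finset.sum_comm]
        apply Finset.sum_congr rfl
        intro j _
        apply Finset.sum_congr rfl
        intro k _
        ring
    _ = ∑ j : Fin (n + 1), (-1 : ℤ) ^ (i : ℕ) * ((-1 : ℤ) ^ (j : ℕ) * ((n - (i : ℕ)).choose (j : ℕ)) * ((X : ℤ[X]) ^ (n - (j : ℕ)) * (1 + X) ^ (j : ℕ)).coeff l) := by
        apply Finset.sum_congr rfl
        intro j _
        rw [inner j, hA]
        ring
    _ = ∑ j ∈ range (n + 1), (-1 : ℤ) ^ (i : ℕ) * ((-1 : ℤ) ^ j * ((n - (i : ℕ)).choose j) * ((X : ℤ[X]) ^ (n - j) * (1 + X) ^ j).coeff l) :=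
        Fin.sum_univ_eq_sum_range (fun j => (-1 : ℤ) ^ (i : ℕ) * ((-1 : ℤ) ^ j * ((n - (i : ℕ)).choose j) * ((X : ℤ[X]) ^ (n - j) * (1 + X) ^ j).coeff l)) (n + 1)
    _ = (-1 : ℤ) ^ (i : ℕ) * ∑ j ∈ range (n + 1), (-1 : ℤ) ^ j * ((n - (i : ℕ)).choose j) * ((X : ℤ[X]) ^ (n - j) * (1 + X) ^ j).coeff l := by
        rw [Finset.mul_sum]
    _ = (-1 : ℤ) ^ (i : ℕ) * ((-1 : ℤ) ^ (n - (i : ℕ)) * ((X : ℤ[X]) ^ (i : ℕ)).coeff l) := by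
        rw [hL2]
    _ = (-1 : ℤ) ^ n * (if i = l then 1 else 0) := by
        rw [Polynomial.coeff_X_pow]
        have hsign : (-1 : ℤ) ^ (i : ℕ) * (-1 : ℤ) ^ (n - (i : ℕ)) = (-1 : ℤ) ^ n := by
          rw [← pow_add]
          congr 1
          omega
        have hif : (if (l : ℕ) = (i : ℕ) then (1:ℤ) else 0) = (if i = l then 1 else 0) := by
          simp [Fin.ext_iff, eq_comm]
        rw [← mul_assoc, hsign, hif]
end

section
/- Let $p$ be a prime and let $A \in \mathrm{GL}_n(\mathbb{Z})$ have finite order $k$ coprime to $p$. Let $B \in \mathrm{GL}_n(\mathbb{F}_p)$ be the reduction of $A$ modulo $p$. Then the multiplicity of $1$ as an eigenvalue of $A$ (i.e., as a root of the characteristic polynomial of $A$) equals the multiplicity of $1$ as an eigenvalue of $B$. -/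
open Polynomial Matrix

/-- If `A ∈ GL_n(ℤ)` has finite order `k` coprime to a prime `p`, and `B` is the
reduction of `A` mod `p`, then the multiplicity of `1` as a root of the characteristic
polynomial of `A` equals that of `B`. -/
theorem stmt_3 (p n k : ℕ) (hp : p.Prime) (hk : 0 < k) (hkp : Nat.Coprime k p)
    (A : Matrix (Fin n) (Fin n) ℤ) (hA : A ^ k = 1) :
    (Matrix.charpoly A).rootMultiplicity 1
      = (Matrix.charpoly (A.map ((↑) : ℤ → ZMod p))).rootMultiplicity 1 := by
  haveI := Fact.mk hp
  -- Step 1: charpoly A ∣ (X^k - 1)^n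
  have hdvd : A.charpoly ∣ ((X : ℤ[X]) ^ k - 1) ^ n := by
    have hcomm : Commute (Matrix.scalar (Fin n) (X : ℤ[X]))
        ((C : ℤ →+* ℤ[X]).mapMatrix A) :=
      scalar_commute _ (fun r' => Commute.all _ _) _
    have h1 : charmatrix A ∣ (Matrix.scalar (Fin n) (X : ℤ[X])) ^ k
        - ((C : ℤ →+* ℤ[X]).mapMatrix A) ^ k := hcomm.sub_dvd_pow_sub_pow k
    have h2 : (Matrix.scalar (Fin n) (X : ℤ[X])) ^ k
        - ((C : ℤ →+* ℤ[X]).mapMatrix A) ^ k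
        = Matrix.scalar (Fin n) ((X : ℤ[X]) ^ k - 1) := by
      rw [← map_pow, ← map_pow, hA, _root_.map_one, map_sub, _root_.map_one]
    rw [h2] at h1
    obtain ⟨c, hc⟩ := h1
    refine ⟨c.det, ?_⟩
    unfold Matrix.charpoly
    have := congrArg Matrix.det hc
    rwa [det_mul, scalar_apply, det_diagonal, Finset.prod_const, Finset.card_univ,
      Fintype.card_fin] at this
  set m := (Matrix.charpoly A).rootMultiplicity 1 with hm
  have hmono := Matrix.charpoly_monic A
  have hchar_ne : A.charpoly ≠ 0 := hmono.ne_zero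
  set g : ℤ[X] := A.charpoly /ₘ (X - C 1) ^ m with hgdef
  have hfac : (X - C 1) ^ m * g = A.charpoly :=
    pow_mul_divByMonic_rootMultiplicity_eq _ _
  have hg1 : g.eval 1 ≠ 0 :=
    eval_divByMonic_pow_rootMultiplicity_ne_zero 1 hchar_ne
  have hgmonic : g.Monic :=
    ((monic_X_sub_C (1:ℤ)).pow m).of_mul_monic_left (hfac ▸ hmono)
  set Φ : ℤ[X] := ∑ i ∈ Finset.range k, X ^ i with hΦ
  -- g divides Φ ^ n over ℤ
  have hgdvd : g ∣ Φ ^ n := by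
    have h1 : g ∣ ((X:ℤ[X])^k - 1)^n := dvd_trans (Dvd.intro_left _ hfac) hdvd
    rw [← geom_sum_mul (X:ℤ[X]) k, mul_pow] at h1
    -- pass to ℚ
    have h2 : g.map (Int.castRingHom ℚ) ∣
        (Φ ^ n).map (Int.castRingHom ℚ) * (((X - C 1) ^ n : ℤ[X]).map (Int.castRingHom ℚ)) := by
      rw [← Polynomial.map_mul]
      refine Polynomial.map_dvd _ ?_
      simpa [_root_.map_one] using h1
    have hnd : ¬ (X - C (1:ℚ)) ∣ g.map (Int.castRingHom ℚ) := by
      rw [dvd_iff_isRoot, IsRoot, Polynomial.eval_one_map]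
      simpa using hg1
    have hcop : IsCoprime (g.map (Int.castRingHom ℚ)) ((X - C (1:ℚ)) ^ n) :=
      (((irreducible_X_sub_C (1:ℚ)).coprime_iff_not_dvd.mpr hnd).symm).pow_right
    have h3 : g.map (Int.castRingHom ℚ) ∣ (Φ ^ n).map (Int.castRingHom ℚ) := by
      refine hcop.dvd_of_dvd_mul_right ?_
      simpa [Polynomial.map_pow, Polynomial.map_sub, Polynomial.map_one] using h2
    exact (Polynomial.map_dvd_map (Int.castRingHom ℚ) Int.cast_injective
      hgmonic).mp h3
  -- now reduce mod p
  have hpk : ¬ (p:ℤ) ∣ (k:ℤ) := by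
    exact_mod_cast (hp.coprime_iff_not_dvd.mp hkp.symm)
  have hBchar : (A.map ((↑) : ℤ → ZMod p)).charpoly
      = (A.charpoly).map (Int.castRingHom (ZMod p)) :=
    Matrix.charpoly_map A (Int.castRingHom (ZMod p))
  set f := Int.castRingHom (ZMod p) with hf
  have hgbar1 : (g.map f).eval 1 ≠ 0 := by
    have hd : (g.map f).eval 1 ∣ ((Φ ^ n).map f).eval 1 :=
      eval_dvd (Polynomial.map_dvd f hgdvd)
    have hΦ1 : ((Φ ^ n).map f).eval 1 = (k : ZMod p) ^ n := by
      rw [Polynomial.eval_one_map]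
      simp [hΦ, Finset.sum_const]
    rw [hΦ1] at hd
    intro h0
    rw [h0] at hd
    have : (k : ZMod p) ^ n = 0 := zero_dvd_iff.mp hd
    have hk0 : (k : ZMod p) ≠ 0 := by
      rw [Ne, ZMod.natCast_eq_zero_iff]
      exact fun hdd => hpk (by exact_mod_cast hdd)
    exact hk0 (pow_eq_zero_iff'.mp this).1
  rw [hBchar, ← hfac, Polynomial.map_mul, Polynomial.map_pow, Polynomial.map_sub,
    Polynomial.map_X, Polynomial.map_C, f.map_one,
    rootMultiplicity_mul (mul_ne_zero (((monic_X_sub_C _).pow m).ne_zero)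
      ((hgmonic.map f).ne_zero)),
    rootMultiplicity_X_sub_C_pow, rootMultiplicity_eq_zero hgbar1, add_zero]
end

section
/- Let $G = \mathbb{Z}^n$ with standard basis $e_1, \ldots, e_n$, let $d_1, \ldots, d_n \ge 1$ be integers, and set $d = d_1 \cdots d_n$. Let $H \le G$ be the subgroup with basis $f_i = d_i e_i$, and let $\iota \colon H \to G$ be the inclusion. Then for each $0 \le q \le n$ there exists a unique group homomorphism $T \colon \Lambda^q(G) \to \Lambda^q(H)$ such that $\Lambda^q(\iota) \circ T = d \cdot \mathrm{id}$ and $T \circ \Lambda^q(\iota) = d \cdot \mathrm{id}$; explicitly, $T(e_{i_1} \wedge \cdots \wedge e_{i_q}) = \frac{d}{d_{i_1} \cdots d_{i_q}} f_{i_1} \wedge \cdots \wedge f_{i_q}$ for $i_1 < \cdots < i_q$. -/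
/-!
The wedges `e_{i₁} ∧ ⋯ ∧ e_{i_q}` (`i₁ < ⋯ < i_q`) form a basis of `Λ^q(ℤⁿ)` on which `Λ^q(ι)`
acts diagonally with eigenvalues `d_{i₁} ⋯ d_{i_q}`, each a divisor of `d`. The diagonal map with
eigenvalues `d / (d_{i₁} ⋯ d_{i_q})` is therefore an inverse of `Λ^q(ι)` up to the factor `d` on
both sides, and the explicit formula determines it on a basis, hence uniquely.
-/

open ExteriorAlgebra

namespace exteriorPower

variable {R M N I : Type*} [CommRing R] [AddCommGroup M] [Module R M] [AddCommGroup N] [Module R N]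

lemma eq_map_of_subtype_comp {q : ℕ} {f : M →ₗ[R] N} {L : ⋀[R]^q M →ₗ[R] ⋀[R]^q N}
    (h : (⋀[R]^q N).subtype ∘ₗ L = (ExteriorAlgebra.map f).toLinearMap ∘ₗ (⋀[R]^q M).subtype) :
    L = map q f := by
  refine linearMap_ext (AlternatingMap.ext fun v => Subtype.ext ?_)
  simpa [Function.comp_def] using LinearMap.congr_fun h (ιMulti R q v)

lemma map_ιMulti_comp_of_apply_eq_smul {q : ℕ} {f : M →ₗ[R] M} {b : I → M} {a : I → R}
    (hf : ∀ i, f (b i) = a i • b i) (g : Fin q → I) :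
    map q f (ιMulti R q (b ∘ g)) = (∏ j, a (g j)) • ιMulti R q (b ∘ g) := by
  rw [map_apply_ιMulti, ← AlternatingMap.map_smul_univ]
  exact congrArg _ (funext fun j => hf (g j))

end exteriorPower

namespace Module.Basis

variable {R M I κ : Type*} [CommRing R] [AddCommGroup M] [Module R M]

noncomputable def exteriorPowerOfOrderEmb [LinearOrder I] (b : Basis I R M) (q : ℕ) :
    Basis (Fin q ↪o I) R (⋀[R]^q M) :=
  (b.exteriorPower q).reindex Set.powersetCard.ofFinEmbEquiv.symm

lemma exteriorPowerOfOrderEmb_apply [LinearOrder I] (b : Basis I R M) (q : ℕ) (f : Fin q ↪o I) :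
    b.exteriorPowerOfOrderEmb q f = exteriorPower.ιMulti R q (b ∘ f) := by
  simp [exteriorPowerOfOrderEmb, exteriorPower.ιMulti_family]

lemma comp_eq_smul_id_of_apply_eq_smul (B : Basis κ R M) {f g : M →ₗ[R] M} {α β : κ → R} {c : R}
    (hf : ∀ k, f (B k) = α k • B k) (hg : ∀ k, g (B k) = β k • B k) (h : ∀ k, α k * β k = c) :
    f ∘ₗ g = c • LinearMap.id :=
  B.ext fun k => by simp [hf, hg, smul_smul, mul_comm, h]

end Module.Basis

lemma Fintype.prod_comp_dvd_prod_of_injective {α β M : Type*} [Fintype α] [Fintype β] [CommMonoid M]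
    (d : β → M) {f : α → β} (hf : Function.Injective f) : (∏ a, d (f a)) ∣ ∏ b, d b := by
  simpa using Finset.prod_dvd_prod_of_subset (Finset.univ.map ⟨f, hf⟩) _ d (Finset.subset_univ _)

theorem stmt_5_general (n q : ℕ) (d : Fin n → ℤ)
    (ι : (Fin n → ℤ) →ₗ[ℤ] (Fin n → ℤ)) (hι : ∀ x i, ι x i = d i * x i)
    (Lι : ↥(⋀[ℤ]^q (Fin n → ℤ)) →ₗ[ℤ] ↥(⋀[ℤ]^q (Fin n → ℤ)))
    (hLι : (⋀[ℤ]^q (Fin n → ℤ)).subtype ∘ₗ Lι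
        = (ExteriorAlgebra.map ι).toLinearMap ∘ₗ (⋀[ℤ]^q (Fin n → ℤ)).subtype) :
    ∃! T : ↥(⋀[ℤ]^q (Fin n → ℤ)) →ₗ[ℤ] ↥(⋀[ℤ]^q (Fin n → ℤ)),
      (Lι ∘ₗ T = (∏ i, d i) • LinearMap.id ∧ T ∘ₗ Lι = (∏ i, d i) • LinearMap.id) ∧
      ∀ idx : Fin q → Fin n, StrictMono idx →
        T ⟨ExteriorAlgebra.ιMulti ℤ q (fun j => Pi.single (idx j) (1 : ℤ)),
            ExteriorAlgebra.ιMulti_range ℤ q (Set.mem_range_self _)⟩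
          = ((∏ i, d i) / ∏ j, d (idx j)) •
            ⟨ExteriorAlgebra.ιMulti ℤ q (fun j => Pi.single (idx j) (1 : ℤ)),
              ExteriorAlgebra.ιMulti_range ℤ q (Set.mem_range_self _)⟩ := by
  set B := (Pi.basisFun ℤ (Fin n)).exteriorPowerOfOrderEmb q
  have hB (f : Fin q ↪o Fin n) : B f = ⟨ExteriorAlgebra.ιMulti ℤ q (fun j => Pi.single (f j) 1),
      ExteriorAlgebra.ιMulti_range ℤ q (Set.mem_range_self _)⟩ := by
    rw [Module.Basis.exteriorPowerOfOrderEmb_apply]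
    exact congrArg (exteriorPower.ιMulti ℤ q) (funext fun j => Pi.basisFun_apply ℤ (Fin n) (f j))
  have hιB (i : Fin n) : ι (Pi.basisFun ℤ (Fin n) i) = d i • Pi.basisFun ℤ (Fin n) i := by
    ext j
    by_cases h : j = i <;> simp [hι, h]
  have hLιB (f : Fin q ↪o Fin n) : Lι (B f) = (∏ j, d (f j)) • B f := by
    rw [exteriorPower.eq_map_of_subtype_comp hLι, Module.Basis.exteriorPowerOfOrderEmb_apply]
    exact exteriorPower.map_ιMulti_comp_of_apply_eq_smul hιB f
  let T := B.constr ℤ fun f => ((∏ i, d i) / ∏ j, d (f j)) • B f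
  have hTB (f : Fin q ↪o Fin n) : T (B f) = ((∏ i, d i) / ∏ j, d (f j)) • B f :=
    B.constr_basis ℤ _ f
  have hdiv (f : Fin q ↪o Fin n) : (∏ j, d (f j)) * ((∏ i, d i) / ∏ j, d (f j)) = ∏ i, d i :=
    Int.mul_ediv_cancel' (Fintype.prod_comp_dvd_prod_of_injective d f.injective)
  refine ⟨T, ⟨⟨B.comp_eq_smul_id_of_apply_eq_smul hLιB hTB hdiv,
    B.comp_eq_smul_id_of_apply_eq_smul hTB hLιB fun f => (mul_comm _ _).trans (hdiv f)⟩,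
    fun idx hidx => ?_⟩, fun T' hT' => B.ext fun f => ?_⟩
  · simpa only [hB, OrderEmbedding.coe_ofStrictMono] using hTB (OrderEmbedding.ofStrictMono idx hidx)
  · rw [hTB, hB, hT'.2 f f.strictMono]

/-- Lemma on exterior powers: with `G = ℤⁿ`, `H ≤ G` the subgroup with basis
`fᵢ = dᵢ eᵢ` (modelled as `G` itself with inclusion `ι(eᵢ) = dᵢ eᵢ`), and
`D = d₁ ⋯ dₙ`, there is a unique `T : Λ^q(G) → Λ^q(H)` with
`Λ^q(ι) ∘ T = D·id = T ∘ Λ^q(ι)`; explicitly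
`T(e_{i₁} ∧ ⋯ ∧ e_{i_q}) = (D / (d_{i₁} ⋯ d_{i_q})) f_{i₁} ∧ ⋯ ∧ f_{i_q}`.
Here `Lι` is the map `Λ^q(ι)`, characterized by commuting with the inclusion of the
exterior power into the exterior algebra. -/
theorem stmt_5 (n q : ℕ) (hq : q ≤ n) (d : Fin n → ℤ) (hd : ∀ i, 1 ≤ d i)
    (ι : (Fin n → ℤ) →ₗ[ℤ] (Fin n → ℤ)) (hι : ∀ x i, ι x i = d i * x i)
    (Lι : ↥(⋀[ℤ]^q (Fin n → ℤ)) →ₗ[ℤ] ↥(⋀[ℤ]^q (Fin n → ℤ)))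
    (hLι : (⋀[ℤ]^q (Fin n → ℤ)).subtype ∘ₗ Lι
        = (ExteriorAlgebra.map ι).toLinearMap ∘ₗ (⋀[ℤ]^q (Fin n → ℤ)).subtype) :
    ∃! T : ↥(⋀[ℤ]^q (Fin n → ℤ)) →ₗ[ℤ] ↥(⋀[ℤ]^q (Fin n → ℤ)),
      (Lι ∘ₗ T = (∏ i, d i) • LinearMap.id ∧ T ∘ₗ Lι = (∏ i, d i) • LinearMap.id) ∧
      ∀ idx : Fin q → Fin n, StrictMono idx →
        T ⟨ExteriorAlgebra.ιMulti ℤ q (fun j => Pi.single (idx j) (1 : ℤ)),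
            ExteriorAlgebra.ιMulti_range ℤ q (Set.mem_range_self _)⟩
          = ((∏ i, d i) / ∏ j, d (idx j)) •
            ⟨ExteriorAlgebra.ιMulti ℤ q (fun j => Pi.single (idx j) (1 : ℤ)),
              ExteriorAlgebra.ιMulti_range ℤ q (Set.mem_range_self _)⟩ :=
  stmt_5_general n q d ι hι Lι hLι
end

section
/- Let $n \ge 2$ be prime and let $A$ be the $n \times n$ rational matrix with $A_{i,i+1} = 1$ for $1 \le i \le n-1$, $A_{n,1} = 1/2$, and all other entries $0$. For $1 \le q \le n-1$, the cokernel of $I - 2\Lambda^q(A)$ acting on $\Lambda^q(\mathbb{Z}^n)$ is isomorphic to $(\mathbb{Z}/(2^{n-q}-1)\mathbb{Z})^{\frac{1}{n}\binom{n}{q}}$. -/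
/-!
In the basis `e_S` of `⋀^q ℤⁿ` (`S` a `q`-subset of `Fin n`), the matrix `C = 2A` sends `e_k` to
`e_{k-1}` times `1` or `2`, so `T = 2 Λ^q(A)` sends `e_S` to `ε_S e_{S-1}`, where `ε_S = 2` if
`0 ∉ S`, and `ε_S = (-1)^(q-1)` if `0 ∈ S` (then `0 ↦ n - 1` jumps from the first to the last
place). For such a monomial operator `e_i ↦ c_i e_{g • i}`, the cokernel of `id - T` splits over
the orbits of `g`: along an orbit every `e_i` becomes a multiple of the orbit representative,
which is killed by `P - 1`, `P` the product of the weights around the orbit. Here every orbit has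
`n` elements since `n` is prime and `0 < q < n`, and exactly `q` of the `n` shifts of `S`
contain `0`, so `P = (-1)^(q(q-1)) 2^(n-q) = 2^(n-q)`.
-/

open Finset MulAction Subgroup Module Equiv Set.powersetCard
open scoped Pointwise

lemma Finset.prod_ite_mem_const {α M : Type*} [Fintype α] [DecidableEq α] [CommMonoid M]
    (S : Finset α) (a b : M) :
    ∏ x, (if x ∈ S then a else b) = a ^ #S * b ^ (Fintype.card α - #S) := by
  rw [prod_ite, prod_const, prod_const, filter_mem_eq_inter, univ_inter, filter_not,
    filter_mem_eq_inter, univ_inter, card_sdiff_of_subset (subset_univ S), card_univ]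

namespace WeightedShift

variable {G ι M : Type*} [Group G] [MulAction G ι] {g : G} {c : ι → ℤ}

variable (g c) in
def pathProd (i : ι) (k : ℕ) : ℤ := ∏ j ∈ range k, c (g ^ j • i)

lemma pathProd_succ (i : ι) (k : ℕ) :
    pathProd g c i (k + 1) = pathProd g c i k * c (g ^ k • i) :=
  prod_range_succ _ _

lemma pathProd_succ' (i : ι) (k : ℕ) :
    pathProd g c i (k + 1) = c i * pathProd g c (g • i) k := by
  simp only [pathProd, prod_range_succ', pow_succ, mul_smul, pow_zero, one_smul, mul_comm]

lemma mk_smul (i : ι) :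
    (Quotient.mk _ (g • i) : orbitRel.Quotient (zpowers g) ι) = Quotient.mk _ i :=
  Quotient.sound (mem_orbit i (⟨g, mem_zpowers g⟩ : zpowers g))

section Telescoping

variable [AddCommGroup M] (b : Basis ι ℤ M) {T : M →ₗ[ℤ] M}
  (hT : ∀ i, T (b i) = c i • b (g • i))
include hT

lemma sub_pathProd_smul_mem_range (i : ι) (k : ℕ) :
    b i - pathProd g c i k • b (g ^ k • i) ∈ LinearMap.range (LinearMap.id - T) := by
  induction k with
  | zero => simp [pathProd]
  | succ k ih =>
    have hstep : b i - pathProd g c i (k + 1) • b (g ^ (k + 1) • i) =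
        (b i - pathProd g c i k • b (g ^ k • i)) +
          pathProd g c i k • (LinearMap.id - T : M →ₗ[ℤ] M) (b (g ^ k • i)) := by
      rw [LinearMap.sub_apply, LinearMap.id_apply, hT, pathProd_succ, pow_succ', mul_smul g]
      module
    rw [hstep]
    exact add_mem ih (Submodule.smul_mem _ _ (LinearMap.mem_range_self _ _))

lemma natCast_smul_mem_range {N : ℕ} (hc : ∀ i, pathProd g c i (period g i) = N + 1) (i : ι) :
    (N : ℤ) • b i ∈ LinearMap.range (LinearMap.id - T) := by
  have h := sub_pathProd_smul_mem_range b hT i (period g i)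
  rw [hc, pow_period_smul] at h
  convert neg_mem h using 1
  module

end Telescoping

variable [Finite ι]

lemma exists_pow_smul_eq_out (g : G) (i : ι) :
    ∃ k : ℕ, g ^ k • i = (Quotient.mk _ i : orbitRel.Quotient (zpowers g) ι).out := by
  obtain ⟨⟨_, k, rfl⟩, hk⟩ := orbitRel_apply.1 (Quotient.mk_out (s := orbitRel (zpowers g) ι) i)
  have hp : 0 < (period g i : ℤ) := by
    rw [period_eq_minimalPeriod]; exact_mod_cast (minimalPeriod_pos g i).pos
  refine ⟨(k % (period g i : ℤ)).toNat, ?_⟩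
  rw [← zpow_natCast, Int.toNat_of_nonneg (Int.emod_nonneg _ hp.ne'), zpow_mod_period_smul]
  exact hk

open scoped Classical in
noncomputable def stepsToRep (g : G) (i : ι) : ℕ := Nat.find (exists_pow_smul_eq_out g i)

lemma pow_stepsToRep_smul (i : ι) :
    g ^ stepsToRep g i • i = (Quotient.mk _ i : orbitRel.Quotient (zpowers g) ι).out := by
  classical
  exact Nat.find_spec (exists_pow_smul_eq_out g i)

lemma stepsToRep_out (o : orbitRel.Quotient (zpowers g) ι) : stepsToRep g o.out = 0 := by
  classical
  refine (Nat.find_eq_zero _).2 ?_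
  rw [pow_zero, one_smul, Quotient.out_eq]

lemma stepsToRep_of_ne_out {i : ι}
    (hi : i ≠ (Quotient.mk _ i : orbitRel.Quotient (zpowers g) ι).out) :
    stepsToRep g i = stepsToRep g (g • i) + 1 := by
  classical
  have hle : stepsToRep g i ≤ stepsToRep g (g • i) + 1 := Nat.find_min' _ <| by
    rw [pow_succ, mul_smul, pow_stepsToRep_smul, mk_smul]
  have hpos : stepsToRep g i ≠ 0 := fun h0 ↦ hi <| by
    simpa [h0] using pow_stepsToRep_smul (g := g) i
  have hge : stepsToRep g (g • i) ≤ stepsToRep g i - 1 := Nat.find_min' _ <| by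
    rw [← mul_smul, ← pow_succ, Nat.sub_add_cancel (Nat.one_le_iff_ne_zero.2 hpos),
      pow_stepsToRep_smul, mk_smul]
  omega

lemma stepsToRep_smul_out (o : orbitRel.Quotient (zpowers g) ι) :
    stepsToRep g (g • o.out) + 1 = period g o.out := by
  classical
  have hfix : g ^ (stepsToRep g (g • o.out) + 1) • o.out = o.out := by
    rw [pow_succ, mul_smul, pow_stepsToRep_smul, mk_smul, Quotient.out_eq]
  have hper : 0 < period g o.out := period_pos_of_fixed (Nat.succ_pos _) hfix
  refine le_antisymm ?_ (period_le_of_fixed (Nat.succ_pos _) hfix)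
  have : stepsToRep g (g • o.out) ≤ period g o.out - 1 := Nat.find_min' _ <| by
    rw [← mul_smul, ← pow_succ, Nat.sub_add_cancel hper, pow_period_smul, mk_smul, Quotient.out_eq]
  omega

variable (g c) in
noncomputable def orbitWeight (i : ι) : ℤ := pathProd g c i (stepsToRep g i)

lemma orbitWeight_out (o : orbitRel.Quotient (zpowers g) ι) : orbitWeight g c o.out = 1 := by
  rw [orbitWeight, stepsToRep_out, pathProd, prod_range_zero]

/-- This holds in `ℤ` except at the orbit representative, where it needs the product around the
orbit to be `1` modulo `N`. -/
lemma orbitWeight_eq_mul {N : ℕ} (hc : ∀ i, pathProd g c i (period g i) = N + 1) (i : ι) :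
    (orbitWeight g c i : ZMod N) = c i * orbitWeight g c (g • i) := by
  by_cases hi : i = (Quotient.mk _ i : orbitRel.Quotient (zpowers g) ι).out
  · have hper : stepsToRep g (g • i) + 1 = period g i := by
      simpa only [← hi] using stepsToRep_smul_out (g := g) (Quotient.mk _ i)
    have hone : orbitWeight g c i = 1 := by rw [hi, orbitWeight_out]
    rw [hone, orbitWeight, ← Int.cast_mul, ← pathProd_succ', hper, hc]
    simp
  · rw [orbitWeight, stepsToRep_of_ne_out hi, pathProd_succ', orbitWeight, Int.cast_mul]

section Coordinates

open scoped Classical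

variable [AddCommGroup M] (b : Basis ι ℤ M) {T : M →ₗ[ℤ] M}

variable (g c) in
/-- On the orbit `o`, this is `x ↦ ∑_{i ∈ o} orbitWeight i * x_i mod N`. -/
noncomputable def orbitCoord (N : ℕ) : M →ₗ[ℤ] (orbitRel.Quotient (zpowers g) ι → ZMod N) :=
  b.constr ℤ fun i ↦ Pi.single (Quotient.mk _ i) (orbitWeight g c i : ZMod N)

lemma orbitCoord_basis (N : ℕ) (i : ι) :
    orbitCoord g c b N (b i) = Pi.single (Quotient.mk _ i) (orbitWeight g c i : ZMod N) :=
  b.constr_basis _ _ _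

lemma orbitCoord_surjective (N : ℕ) : Function.Surjective (orbitCoord g c b N) := by
  have := Fintype.ofFinite (orbitRel.Quotient (zpowers g) ι)
  intro f
  refine ⟨∑ o, (ZMod.cast (f o) : ℤ) • b o.out, ?_⟩
  rw [map_sum]
  conv_rhs => rw [← Finset.univ_sum_single f]
  refine Finset.sum_congr rfl fun o _ ↦ ?_
  rw [map_smul, orbitCoord_basis, Quotient.out_eq, orbitWeight_out, ← Pi.single_smul,
    zsmul_eq_mul, Int.cast_one, mul_one, ZMod.intCast_zmod_cast]

variable {N : ℕ} (hT : ∀ i, T (b i) = c i • b (g • i))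
  (hc : ∀ i, pathProd g c i (period g i) = N + 1)
include hT hc

lemma range_le_ker_orbitCoord :
    LinearMap.range (LinearMap.id - T) ≤ LinearMap.ker (orbitCoord g c b N) := by
  rw [LinearMap.range_le_ker_iff]
  refine b.ext fun i ↦ ?_
  rw [LinearMap.comp_apply, LinearMap.sub_apply, LinearMap.id_apply, hT, map_sub, map_smul,
    orbitCoord_basis, orbitCoord_basis, mk_smul, orbitWeight_eq_mul hc, ← Pi.single_smul,
    zsmul_eq_mul, sub_self, LinearMap.zero_apply]

lemma ker_orbitCoord_le_range :
    LinearMap.ker (orbitCoord g c b N) ≤ LinearMap.range (LinearMap.id - T) := by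
  have := Fintype.ofFinite ι
  have := Fintype.ofFinite (orbitRel.Quotient (zpowers g) ι)
  set π := (LinearMap.range (LinearMap.id - T)).mkQ
  have hrep (i : ι) : π (b i) =
      orbitWeight g c i • π (b (Quotient.mk _ i : orbitRel.Quotient (zpowers g) ι).out) := by
    rw [← map_smul, Submodule.mkQ_apply, Submodule.mkQ_apply, Submodule.Quotient.eq,
      ← pow_stepsToRep_smul]
    exact sub_pathProd_smul_mem_range b hT i _
  have hN (o : orbitRel.Quotient (zpowers g) ι) : (N : ℤ) • π (b o.out) = 0 := by
    rw [← map_smul, Submodule.mkQ_apply, Submodule.Quotient.mk_eq_zero]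
    exact natCast_smul_mem_range b hT hc _
  intro x hx
  let a (o : orbitRel.Quotient (zpowers g) ι) : ℤ :=
    ∑ i with Quotient.mk _ i = o, b.equivFun x i * orbitWeight g c i
  have ha (o) : (N : ℤ) ∣ a o := by
    rw [← ZMod.intCast_zmod_eq_zero_iff_dvd]
    have := congr_fun hx o
    rw [orbitCoord, Basis.constr_apply_fintype] at this
    simpa [a, Finset.sum_apply, Pi.single_apply, Finset.sum_ite, eq_comm] using this
  rw [← Submodule.Quotient.mk_eq_zero, ← Submodule.mkQ_apply, ← b.sum_equivFun x]
  calc π (∑ i, b.equivFun x i • b i)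
      = ∑ i, (b.equivFun x i * orbitWeight g c i) •
          π (b (Quotient.mk _ i : orbitRel.Quotient (zpowers g) ι).out) := by
        rw [map_sum]
        exact Finset.sum_congr rfl fun i _ ↦ by rw [map_smul, hrep, mul_smul]
    _ = ∑ o, a o • π (b o.out) := by
        rw [← Finset.sum_fiberwise _ (fun i ↦ (Quotient.mk _ i : orbitRel.Quotient (zpowers g) ι))]
        refine Finset.sum_congr rfl fun o _ ↦ ?_
        rw [Finset.sum_smul]
        refine Finset.sum_congr rfl fun i hi ↦ ?_
        rw [(Finset.mem_filter.1 hi).2]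
    _ = 0 := by
        refine Finset.sum_eq_zero fun o _ ↦ ?_
        obtain ⟨k, hk⟩ := ha o
        rw [hk, mul_comm, mul_smul, hN, smul_zero]

noncomputable def quotRangeEquiv :
    (M ⧸ LinearMap.range (LinearMap.id - T)) ≃ₗ[ℤ] (orbitRel.Quotient (zpowers g) ι → ZMod N) :=
  (Submodule.quotEquivOfEq _ _ (le_antisymm (ker_orbitCoord_le_range b hT hc)
      (range_le_ker_orbitCoord b hT hc)).symm).trans
    ((orbitCoord g c b N).quotKerEquivOfSurjective (orbitCoord_surjective b N))

end Coordinates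

lemma card_eq_card_orbits_mul {m : ℕ} (h : ∀ i : ι, period g i = m) :
    Nat.card ι = Nat.card (orbitRel.Quotient (zpowers g) ι) * m := by
  have := Fintype.ofFinite ι
  have := Fintype.ofFinite (orbitRel.Quotient (zpowers g) ι)
  classical
  rw [Nat.card_congr (selfEquivSigmaOrbits (zpowers g) ι), Nat.card_sigma]
  simp_rw [Nat.card_eq_fintype_card, ← minimalPeriod_eq_card, ← period_eq_minimalPeriod, h]
  rw [Finset.sum_const, Finset.card_univ, smul_eq_mul]

end WeightedShift

namespace CyclicShift

variable {n q : ℕ}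

lemma finRotate_inv_pow_card (hn : 2 ≤ n) : (finRotate n)⁻¹ ^ n = 1 := by
  have h := (isCycle_finRotate_of_le hn).orderOf
  rw [support_finRotate_of_le hn, card_univ, Fintype.card_fin] at h
  have := pow_orderOf_eq_one (finRotate n)⁻¹
  rwa [orderOf_inv, h] at this

lemma eq_univ_of_finRotate_smul_eq (hn : 2 ≤ n) {S : Finset (Fin n)} (hS : S.Nonempty)
    (h : finRotate n • S = S) : S = univ := by
  obtain ⟨x, hx⟩ := hS
  refine eq_univ_of_forall fun y ↦ ?_
  have hsupp (z : Fin n) : finRotate n z ≠ z := by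
    rw [← Perm.mem_support, support_finRotate_of_le hn]; exact mem_univ z
  obtain ⟨k, rfl⟩ := (isCycle_finRotate_of_le hn).exists_pow_eq (hsupp x) (hsupp y)
  have hk : finRotate n ^ k • S = S := by
    induction k with
    | zero => rw [pow_zero, one_smul]
    | succ k ih => rw [pow_succ, mul_smul, h, ih]
  rw [← hk]
  exact smul_mem_smul_finset hx

lemma period_finRotate_inv (hn : n.Prime) (hq : 0 < q) (hqn : q < n)
    (S : Set.powersetCard (Fin n) q) : period (finRotate n)⁻¹ S = n := by
  have hdvd : period (finRotate n)⁻¹ S ∣ n := pow_smul_eq_iff_period_dvd.1 <| by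
    rw [finRotate_inv_pow_card hn.two_le, one_smul]
  refine (hn.eq_one_or_self_of_dvd _ hdvd).resolve_left fun h1 ↦ ?_
  have hfix : finRotate n • S = S := by
    have := pow_period_smul (finRotate n)⁻¹ S
    rw [h1, pow_one, inv_smul_eq_iff] at this
    exact this.symm
  have hS : (S : Finset (Fin n)) = univ := by
    refine eq_univ_of_finRotate_smul_eq hn.two_le ?_ ?_
    · rw [← card_pos, card_eq]; exact hq
    · rw [← Set.powersetCard.coe_smul, hfix]
  have := card_eq S
  rw [hS, card_univ, Fintype.card_fin] at this
  omega

lemma finRotate_inv_smul_mem (S : Set.powersetCard (Fin n) q) (j : Fin q) :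
    (finRotate n)⁻¹ (ofFinEmbEquiv.symm S j) ∈
      ((finRotate n)⁻¹ • S : Set.powersetCard (Fin n) q) := by
  rw [← mem_coe_iff, Set.powersetCard.coe_smul]
  exact smul_mem_smul_finset ((mem_range_ofFinEmbEquiv_symm_iff_mem S _).1 ⟨j, rfl⟩)

lemma prod_ofFinEmbEquiv_symm {M : Type*} [CommMonoid M] (f : Fin n → M)
    (S : Set.powersetCard (Fin n) q) :
    ∏ j, f (ofFinEmbEquiv.symm S j) = ∏ x ∈ (S : Finset (Fin n)), f x := by
  have himg : univ.image (ofFinEmbEquiv.symm S) = (S : Finset (Fin n)) := by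
    rw [ofFinEmbEquiv_symm_apply]; exact image_orderEmbOfFin_univ _ _
  rw [← himg, prod_image fun a _ b _ h ↦ (ofFinEmbEquiv.symm S).injective h]

variable [NeZero n]

def shiftCoeff (S : Set.powersetCard (Fin n) q) : ℤ :=
  if (0 : Fin n) ∈ (S : Finset (Fin n)) then (-1) ^ (q - 1) else 2

lemma finRotate_pow_val_apply_zero (i : Fin n) : (finRotate n ^ (i : ℕ)) 0 = i := by
  rw [Perm.coe_pow, ← finCycle_eq_finRotate_iterate, finCycle_apply, zero_add]

lemma prod_shiftCoeff (S : Set.powersetCard (Fin n) q) :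
    ∏ k ∈ range n, shiftCoeff ((finRotate n)⁻¹ ^ k • S) = 2 ^ (n - q) := by
  have hmem (k : ℕ) : (0 : Fin n) ∈ ((finRotate n)⁻¹ ^ k • S : Set.powersetCard (Fin n) q).val ↔
      (finRotate n ^ k) 0 ∈ (S : Finset (Fin n)) := by
    rw [Set.powersetCard.coe_smul, ← Finset.inv_smul_mem_iff, inv_pow, inv_inv, Perm.smul_def]
  simp only [shiftCoeff, hmem]
  rw [← Fin.prod_univ_eq_prod_range
    (fun k ↦ if (finRotate n ^ k) 0 ∈ (S : Finset (Fin n)) then (-1 : ℤ) ^ (q - 1) else 2)]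
  simp only [finRotate_pow_val_apply_zero]
  rw [prod_ite_mem_const, card_eq, Fintype.card_fin, ← pow_mul, mul_comm (q - 1),
    (Nat.even_mul_pred_self q).neg_one_pow, one_mul]

lemma val_finRotate_inv (x : Fin n) :
    ((finRotate n)⁻¹ x : ℕ) = if x = 0 then n - 1 else x - 1 := by
  obtain ⟨m, rfl⟩ := Nat.exists_eq_add_one_of_ne_zero (NeZero.ne n)
  split_ifs with hx
  · rw [hx, Perm.inv_def, finRotate_symm_apply, zero_sub, Fin.coe_neg_one, Nat.add_sub_cancel]
  · exact coe_finRotate_symm_of_ne_zero hx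

lemma finRotate_inv_comp_ofFinEmbEquiv_symm {S : Set.powersetCard (Fin n) q} (h : (0 : Fin n) ∉ S) :
    ⇑((finRotate n)⁻¹) ∘ ofFinEmbEquiv.symm S = ofFinEmbEquiv.symm ((finRotate n)⁻¹ • S) := by
  have hne (j : Fin q) : ofFinEmbEquiv.symm S j ≠ 0 := fun h0 ↦
    h (h0 ▸ (mem_range_ofFinEmbEquiv_symm_iff_mem S _).1 ⟨j, rfl⟩)
  rw [ofFinEmbEquiv_symm_apply ((finRotate n)⁻¹ • S)]
  refine orderEmbOfFin_unique _ (finRotate_inv_smul_mem S) fun a b hab ↦ ?_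
  have hlt := Fin.lt_def.1 ((ofFinEmbEquiv.symm S).strictMono hab)
  have ha := Fin.val_ne_zero_iff.2 (hne a)
  rw [Function.comp_apply, Function.comp_apply, Fin.lt_def, val_finRotate_inv, val_finRotate_inv,
    if_neg (hne a), if_neg (hne b)]
  omega

/-- If `0 ∈ S`, the shift sends the least element `0` of `S` to `n - 1`, the greatest element of
the shifted set, so the shifted enumeration has to be rotated to become increasing again. -/
lemma finRotate_inv_comp_ofFinEmbEquiv_symm_comp_finRotate {S : Set.powersetCard (Fin n) q}
    (h : (0 : Fin n) ∈ S) :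
    ⇑((finRotate n)⁻¹) ∘ ofFinEmbEquiv.symm S ∘ finRotate q =
      ofFinEmbEquiv.symm ((finRotate n)⁻¹ • S) := by
  set s := ofFinEmbEquiv.symm S
  obtain ⟨j₀, hj₀⟩ := (mem_range_ofFinEmbEquiv_symm_iff_mem S 0).2 h
  obtain ⟨q, rfl⟩ := Nat.exists_eq_add_one_of_ne_zero j₀.pos.ne'
  have hs0 : s 0 = 0 := nonpos_iff_eq_zero.1 (hj₀ ▸ s.monotone (Fin.zero_le j₀))
  have hne {j : Fin (q + 1)} (hj : j ≠ 0) : s j ≠ 0 := fun h0 ↦ hj (s.injective (h0.trans hs0.symm))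
  rw [ofFinEmbEquiv_symm_apply ((finRotate n)⁻¹ • S)]
  refine orderEmbOfFin_unique _ (fun j ↦ finRotate_inv_smul_mem S _) fun a b hab ↦ ?_
  have hab' := Fin.lt_def.1 hab
  have ha : a ≠ Fin.last q := fun h ↦ by simp [h, Fin.val_last] at hab'; omega
  have hra : (finRotate (q + 1) a : ℕ) = a + 1 := coe_finRotate_of_ne_last ha
  have hra0 : finRotate (q + 1) a ≠ 0 := fun h0 ↦ by simp [h0] at hra
  have hsa := Fin.val_ne_zero_iff.2 (hne hra0)
  have hsn := (s (finRotate (q + 1) a)).isLt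
  simp only [Function.comp_apply, Fin.lt_def, val_finRotate_inv, if_neg (hne hra0)]
  by_cases hb : b = Fin.last q
  · rw [hb, finRotate_last, hs0, if_pos rfl]
    omega
  · have hrb : (finRotate (q + 1) b : ℕ) = b + 1 := coe_finRotate_of_ne_last hb
    have hrb0 : finRotate (q + 1) b ≠ 0 := fun h0 ↦ by simp [h0] at hrb
    have hlt : s (finRotate (q + 1) a) < s (finRotate (q + 1) b) :=
      s.strictMono (Fin.lt_def.2 (by omega))
    rw [Fin.lt_def] at hlt
    rw [if_neg (hne hrb0)]
    omega

lemma ιMulti_finRotate_inv (S : Set.powersetCard (Fin n) q) :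
    ExteriorAlgebra.ιMulti ℤ q
        (fun j ↦ (Pi.single ((finRotate n)⁻¹ (ofFinEmbEquiv.symm S j)) 1 : Fin n → ℤ)) =
      (if (0 : Fin n) ∈ (S : Finset (Fin n)) then (-1) ^ (q - 1) else 1) •
        ExteriorAlgebra.ιMulti ℤ q
          (fun j ↦ (Pi.single (ofFinEmbEquiv.symm ((finRotate n)⁻¹ • S) j) 1 : Fin n → ℤ)) := by
  split_ifs with h
  · rw [← finRotate_inv_comp_ofFinEmbEquiv_symm_comp_finRotate h]
    have := (ExteriorAlgebra.ιMulti ℤ q).map_perm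
      (fun j ↦ (Pi.single ((finRotate n)⁻¹ (ofFinEmbEquiv.symm S j)) 1 : Fin n → ℤ)) (finRotate q)
    rw [Function.comp_def] at this
    rw [Function.comp_def, Function.comp_def, this, sign_finRotate, Units.smul_def, smul_smul,
      Units.val_pow_eq_pow_val, Units.val_neg, Units.val_one, ← mul_pow, neg_one_mul, neg_neg,
      one_pow, one_smul]
  · rw [← finRotate_inv_comp_ofFinEmbEquiv_symm h, one_smul]
    rfl

def colWeight (k : Fin n) : ℤ := if k = 0 then 1 else 2

lemma prod_colWeight (S : Set.powersetCard (Fin n) q) :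
    ∏ x ∈ (S : Finset (Fin n)), colWeight x =
      if (0 : Fin n) ∈ (S : Finset (Fin n)) then 2 ^ (q - 1) else 2 ^ q := by
  simp only [colWeight]
  rw [prod_ite, prod_const_one, one_mul, prod_const, filter_ne']
  split_ifs with h
  · rw [card_erase_of_mem h, card_eq]
  · rw [erase_eq_of_notMem h, card_eq]

omit [NeZero n] in
lemma coe_exteriorPower_basis (S : Set.powersetCard (Fin n) q) :
    ((Pi.basisFun ℤ (Fin n)).exteriorPower q S : ExteriorAlgebra ℤ (Fin n → ℤ)) =
      ExteriorAlgebra.ιMulti ℤ q (fun j ↦ Pi.single (ofFinEmbEquiv.symm S j) 1) := by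
  rw [exteriorPower.basis_apply, exteriorPower.ιMulti_family_apply_coe]
  simp only [ExteriorAlgebra.ιMulti_family, Function.comp_def, Pi.basisFun_apply]

section ShiftMatrix

variable {C : Matrix (Fin n) (Fin n) ℤ}
  (hC : ∀ i j : Fin n, C i j =
    if (j : ℕ) = (i : ℕ) + 1 then 2
    else if (i : ℕ) = n - 1 ∧ (j : ℕ) = 0 then 1 else 0)
include hC

lemma mulVec_single (k : Fin n) :
    C.mulVec (Pi.single k 1) = colWeight k • Pi.single ((finRotate n)⁻¹ k) 1 := by
  obtain ⟨m, rfl⟩ := Nat.exists_eq_add_one_of_ne_zero (NeZero.ne n)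
  ext i
  have hi : i = (finRotate (m + 1))⁻¹ k ↔ k = finRotate (m + 1) i := by
    rw [Perm.inv_def, eq_symm_apply, eq_comm]
  rw [Matrix.mulVec_single_one, Matrix.col_apply, hC, Pi.smul_apply, Pi.single_apply,
    smul_eq_mul, mul_ite, mul_one, mul_zero, colWeight]
  simp only [hi, Fin.ext_iff, coe_finRotate, Fin.val_last, Fin.val_zero]
  split_ifs <;> omega

lemma ιMulti_mulVec_single (S : Set.powersetCard (Fin n) q) (hq : 1 ≤ q) :
    ExteriorAlgebra.ιMulti ℤ q (fun j ↦ C.mulVec (Pi.single (ofFinEmbEquiv.symm S j) 1)) =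
      (2 ^ (q - 1) * shiftCoeff S) • ExteriorAlgebra.ιMulti ℤ q
        (fun j ↦ (Pi.single (ofFinEmbEquiv.symm ((finRotate n)⁻¹ • S) j) 1 : Fin n → ℤ)) := by
  simp only [mulVec_single hC]
  rw [AlternatingMap.map_smul_univ, ιMulti_finRotate_inv, smul_smul, prod_ofFinEmbEquiv_symm,
    prod_colWeight, shiftCoeff]
  congr 1
  obtain ⟨q, rfl⟩ := Nat.exists_eq_add_one_of_ne_zero (by omega : q ≠ 0)
  rw [Nat.add_sub_cancel]
  split_ifs <;> ring

lemma apply_exteriorPower_basis (S : Set.powersetCard (Fin n) q) (hq : 1 ≤ q)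
    {T : ↥(⋀[ℤ]^q (Fin n → ℤ)) →ₗ[ℤ] ↥(⋀[ℤ]^q (Fin n → ℤ))}
    (hT : ∀ v : Fin q → (Fin n → ℤ),
      (2 : ℤ) ^ (q - 1) • ((⋀[ℤ]^q (Fin n → ℤ)).subtype
          (T ⟨ExteriorAlgebra.ιMulti ℤ q v,
            ExteriorAlgebra.ιMulti_range ℤ q (Set.mem_range_self _)⟩))
        = ExteriorAlgebra.ιMulti ℤ q (fun j => C.mulVec (v j))) :
    T ((Pi.basisFun ℤ (Fin n)).exteriorPower q S) =
      shiftCoeff S • (Pi.basisFun ℤ (Fin n)).exteriorPower q ((finRotate n)⁻¹ • S) := by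
  have hB : (⟨ExteriorAlgebra.ιMulti ℤ q (fun j ↦ Pi.single (ofFinEmbEquiv.symm S j) 1),
      ExteriorAlgebra.ιMulti_range ℤ q (Set.mem_range_self _)⟩ : ⋀[ℤ]^q (Fin n → ℤ)) =
      (Pi.basisFun ℤ (Fin n)).exteriorPower q S :=
    Subtype.ext (coe_exteriorPower_basis S).symm
  have h := hT (fun j ↦ Pi.single (ofFinEmbEquiv.symm S j) 1)
  rw [hB, ιMulti_mulVec_single hC S hq, mul_smul, ← coe_exteriorPower_basis] at h
  refine smul_right_injective _ (pow_ne_zero (q - 1) (two_ne_zero (α := ℤ)))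
    (Subtype.val_injective ?_)
  simpa using h

end ShiftMatrix

end CyclicShift

open WeightedShift CyclicShift in
/-- For `n ≥ 2` prime and the `n × n` rational matrix `A` with `A_{i,i+1} = 1`,
`A_{n,1} = 1/2` (encoded via the integer matrix `C = 2A`), and `1 ≤ q ≤ n - 1`,
the cokernel of `I - 2Λ^q(A)` on `Λ^q(ℤⁿ)` is `(ℤ/(2^{n-q}-1)ℤ)^{C(n,q)/n}`.
The map `T = 2Λ^q(A)` is characterized by `2^{q-1} T = Λ^q(C)` on wedges. -/
theorem stmt_11 (n q : ℕ) (hn : n.Prime) (hq1 : 1 ≤ q) (hq2 : q ≤ n - 1)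
    (C : Matrix (Fin n) (Fin n) ℤ)
    (hC : ∀ i j : Fin n, C i j =
      if (j : ℕ) = (i : ℕ) + 1 then 2
      else if (i : ℕ) = n - 1 ∧ (j : ℕ) = 0 then 1 else 0)
    (T : ↥(⋀[ℤ]^q (Fin n → ℤ)) →ₗ[ℤ] ↥(⋀[ℤ]^q (Fin n → ℤ)))
    (hT : ∀ v : Fin q → (Fin n → ℤ),
      (2 : ℤ) ^ (q - 1) • ((⋀[ℤ]^q (Fin n → ℤ)).subtype
          (T ⟨ExteriorAlgebra.ιMulti ℤ q v, ExteriorAlgebra.ιMulti_range ℤ q (Set.mem_range_self _)⟩))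
        = ExteriorAlgebra.ιMulti ℤ q (fun j => C.mulVec (v j))) :
    Nonempty ((↥(⋀[ℤ]^q (Fin n → ℤ)) ⧸ LinearMap.range (LinearMap.id - T))
        ≃+ (Fin (n.choose q / n) → ZMod (2 ^ (n - q) - 1))) := by
  have : NeZero n := ⟨hn.ne_zero⟩
  have hqn : q < n := by have := hn.two_le; omega
  have hper (S : Set.powersetCard (Fin n) q) := period_finRotate_inv hn hq1 hqn S
  have hc (S : Set.powersetCard (Fin n) q) :
      pathProd (finRotate n)⁻¹ shiftCoeff S (period (finRotate n)⁻¹ S) =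
        ((2 ^ (n - q) - 1 : ℕ) : ℤ) + 1 := by
    rw [hper, pathProd, prod_shiftCoeff, Nat.cast_sub Nat.one_le_two_pow]
    push_cast
    ring
  have hcard : Nat.card (orbitRel.Quotient (zpowers (finRotate n)⁻¹) (Set.powersetCard (Fin n) q))
      = n.choose q / n := by
    have := card_eq_card_orbits_mul hper
    rw [Set.powersetCard.card, Nat.card_eq_fintype_card, Fintype.card_fin] at this
    rw [this, Nat.mul_div_cancel _ hn.pos]
  exact ⟨(quotRangeEquiv _ (fun S ↦ apply_exteriorPower_basis hC S hq1 hT) hc).toAddEquiv.trans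
    (LinearEquiv.funCongrLeft ℤ _ ((Finite.equivFin _).trans (finCongr hcard)).symm).toAddEquiv⟩
end

section
/- Let $m, n \ge 2$ with $\gcd(m,n) = 1$ and let $G = \mathbb{Z}/(m-1)\mathbb{Z} \oplus \mathbb{Z}$. Define the endomorphism $\Phi \colon G \to G$ by $\Phi(1,0) = (1,0)$ and $\Phi(0,1) = (s, n)$ where $s = \sum_{i=0}^{n-1} \lfloor mi/n \rfloor \bmod (m-1)$. Then $\ker(\mathrm{id} - \Phi) \cong \mathbb{Z}/(m-1)\mathbb{Z}$ and $\mathrm{coker}(\mathrm{id} - \Phi) \cong \mathbb{Z}/(m-1)\mathbb{Z} \oplus \mathbb{Z}/(n-1)\mathbb{Z}$. -/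
lemma pair_div (m n i : ℕ) (hn : 2 ≤ n) (h : Nat.Coprime m n) (hi : i < n - 1) :
    m * (i + 1) / n + m * (n - 1 - i) / n = m - 1 := by
  have hn0 : 0 < n := by omega
  have hadd : m * (i + 1) + m * (n - 1 - i) = m * n := by
    have hx : (i + 1) + (n - 1 - i) = n := by omega
    rw [← Nat.mul_add, hx]
  have hnd1 : ¬ n ∣ m * (i + 1) := by
    intro hd
    have h1 := Nat.Coprime.dvd_of_dvd_mul_left h.symm hd
    have := Nat.le_of_dvd (by omega) h1
    omega
  have hnd2 : ¬ n ∣ m * (n - 1 - i) := by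
    intro hd
    have h1 := Nat.Coprime.dvd_of_dvd_mul_left h.symm hd
    have := Nat.le_of_dvd (by omega) h1
    omega
  set a := m * (i + 1) with ha
  set b := m * (n - 1 - i) with hb
  have hr1 : 0 < a % n := by
    rcases Nat.eq_zero_or_pos (a % n) with hz | hp
    · exact absurd (Nat.dvd_of_mod_eq_zero hz) hnd1
    · exact hp
  have hr2 : 0 < b % n := by
    rcases Nat.eq_zero_or_pos (b % n) with hz | hp
    · exact absurd (Nat.dvd_of_mod_eq_zero hz) hnd2
    · exact hp
  have hmod : (a % n + b % n) % n = 0 := by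
    rw [← Nat.add_mod, hadd, Nat.mul_mod_left]
  have hsum : a % n + b % n = n := by
    have hd := Nat.dvd_of_mod_eq_zero hmod
    have h1 : a % n < n := Nat.mod_lt _ hn0
    have h2 : b % n < n := Nat.mod_lt _ hn0
    rcases hd with ⟨k, hk⟩
    rcases k with _ | _ | k
    · omega
    · omega
    · have : n * (k + 1 + 1) ≥ 2 * n := by nlinarith
      omega
  have hdiv := Nat.add_div hn0 (a := a) (b := b)
  rw [hadd, Nat.mul_div_cancel _ hn0, if_pos (by omega)] at hdiv
  generalize hq : a / n = q at hdiv ⊢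
  generalize hr : b / n = r at hdiv ⊢
  omega

lemma two_mul_sum (m n : ℕ) (hn : 2 ≤ n) (h : Nat.Coprime m n) :
    2 * ∑ i ∈ Finset.range n, m * i / n = (m - 1) * (n - 1) := by
  have hrw : ∑ i ∈ Finset.range n, m * i / n
      = ∑ i ∈ Finset.range (n - 1), m * (i + 1) / n := by
    have hn' : n = (n - 1) + 1 := by omega
    rw [hn', Finset.sum_range_succ']
    simp
  have hrefl : ∑ i ∈ Finset.range (n - 1), m * (i + 1) / n
      = ∑ i ∈ Finset.range (n - 1), m * (n - 1 - i) / n := by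
    rw [← Finset.sum_range_reflect]
    refine Finset.sum_congr rfl fun i hi => ?_
    simp only [Finset.mem_range] at hi
    congr 2
    omega
  rw [two_mul, hrw]
  nth_rewrite 2 [hrefl]
  rw [← Finset.sum_add_distrib,
    Finset.sum_congr rfl (fun i hi => pair_div m n i hn h (Finset.mem_range.1 hi)),
    Finset.sum_const, smul_eq_mul, Finset.card_range, mul_comm]

lemma gcd_dvd_sum (m n : ℕ) (hm : 2 ≤ m) (hn : 2 ≤ n) (h : Nat.Coprime m n) :
    Nat.gcd (n - 1) (m - 1) ∣ ∑ i ∈ Finset.range n, m * i / n := by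
  set S := ∑ i ∈ Finset.range n, m * i / n with hS
  have h2 := two_mul_sum m n hn h
  set g := Nat.gcd (n - 1) (m - 1) with hg
  by_cases heven : 2 ∣ g
  · obtain ⟨a, ha⟩ : 2 ∣ (n - 1) := heven.trans (Nat.gcd_dvd_left _ _)
    have hS2 : 2 * S = 2 * ((m - 1) * a) := by rw [h2, ha]; ring
    have hS' : S = (m - 1) * a := by omega
    rw [hS']
    exact Dvd.dvd.mul_right (Nat.gcd_dvd_right _ _) _
  · have hodd : Nat.Coprime g 2 := by
      rw [Nat.coprime_iff_gcd_eq_one]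
      have hd2 : Nat.gcd g 2 ∣ 2 := Nat.gcd_dvd_right _ _
      have hdg : Nat.gcd g 2 ∣ g := Nat.gcd_dvd_left _ _
      rcases (Nat.dvd_prime Nat.prime_two).1 hd2 with h1 | h1
      · exact h1
      · exact absurd (h1 ▸ hdg) heven
    have hdvd : g ∣ 2 * S := by
      rw [h2]
      exact Dvd.dvd.mul_right (Nat.gcd_dvd_right _ _) _
    exact Nat.Coprime.dvd_of_dvd_mul_left hodd hdvd

lemma exists_c (m n : ℕ) (hm : 2 ≤ m) (hn : 2 ≤ n) (h : Nat.Coprime m n) :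
    ∃ c : ℤ, ((m - 1 : ℕ) : ℤ) ∣ ((n - 1 : ℕ) : ℤ) * c
      + ((∑ i ∈ Finset.range n, m * i / n : ℕ) : ℤ) := by
  obtain ⟨u, hu⟩ := gcd_dvd_sum m n hm hn h
  set N : ℤ := ((n - 1 : ℕ) : ℤ)
  set M : ℤ := ((m - 1 : ℕ) : ℤ)
  set A := Int.gcdA N M with hA
  set B := Int.gcdB N M with hB
  have hbez := Int.gcd_eq_gcd_ab N M
  have hgcd : (Int.gcd N M : ℤ) = ((Nat.gcd (n - 1) (m - 1) : ℕ) : ℤ) := by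
    simp [N, M, Int.gcd_natCast_natCast]
  refine ⟨-A * u, ⟨B * u, ?_⟩⟩
  have hu' : ((∑ i ∈ Finset.range n, m * i / n : ℕ) : ℤ)
      = ((Nat.gcd (n - 1) (m - 1) : ℕ) : ℤ) * u := by exact_mod_cast congrArg Nat.cast hu
  rw [hu', ← hgcd, hbez]
  ring

/-- Let `G = ℤ/(m-1)ℤ ⊕ ℤ` and `Φ` the endomorphism with `Φ(a,k) = (a + k·s, nk)`
where `s = ∑_{i<n} ⌊mi/n⌋ mod (m-1)`. Then `ker(id - Φ) ≅ ℤ/(m-1)ℤ` and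
`coker(id - Φ) ≅ ℤ/(m-1)ℤ ⊕ ℤ/(n-1)ℤ`. -/
theorem stmt_14 (m n : ℕ) (hm : 2 ≤ m) (hn : 2 ≤ n) (h : Nat.Coprime m n)
    (Φ : ZMod (m - 1) × ℤ →+ ZMod (m - 1) × ℤ)
    (hΦ : ∀ (a : ZMod (m - 1)) (k : ℤ),
      Φ (a, k) = (a + k • ((∑ i ∈ Finset.range n, m * i / n : ℕ) : ZMod (m - 1)), (n : ℤ) * k)) :
    Nonempty ((AddMonoidHom.ker (AddMonoidHom.id (ZMod (m - 1) × ℤ) - Φ)) ≃+ ZMod (m - 1)) ∧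
    Nonempty (((ZMod (m - 1) × ℤ) ⧸ (AddMonoidHom.id (ZMod (m - 1) × ℤ) - Φ).range)
        ≃+ (ZMod (m - 1) × ZMod (n - 1))) := by
  haveI : NeZero (n - 1) := ⟨by omega⟩
  set S : ℕ := ∑ i ∈ Finset.range n, m * i / n with hS
  set sbar : ZMod (m - 1) := (S : ZMod (m - 1)) with hsbar
  constructor
  · -- kernel ≅ ZMod (m-1)
    have hmem0 : ∀ a : ZMod (m - 1),
        (a, (0 : ℤ)) ∈ (AddMonoidHom.id (ZMod (m - 1) × ℤ) - Φ).ker := by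
      intro a
      rw [AddMonoidHom.mem_ker, AddMonoidHom.sub_apply, AddMonoidHom.id_apply, hΦ]
      simp [Prod.ext_iff]
    refine ⟨{ toFun := fun x => (x : ZMod (m - 1) × ℤ).1
              invFun := fun a => ⟨(a, 0), hmem0 a⟩
              left_inv := ?_
              right_inv := fun a => rfl
              map_add' := fun x y => rfl }⟩
    rintro ⟨⟨a, k⟩, hx⟩
    have hx' := hx
    rw [AddMonoidHom.mem_ker, AddMonoidHom.sub_apply, AddMonoidHom.id_apply, hΦ,
      Prod.ext_iff] at hx'
    have h2 : k - (n : ℤ) * k = 0 := hx'.2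
    have hk : k = 0 := by
      have hmul : k * (1 - (n : ℤ)) = 0 := by linear_combination h2
      rcases mul_eq_zero.1 hmul with h0 | h0
      · exact h0
      · exfalso
        have : (2 : ℤ) ≤ (n : ℤ) := by exact_mod_cast hn
        omega
    subst hk
    rfl
  · -- cokernel ≅ ZMod (m-1) × ZMod (n-1)
    obtain ⟨c, hc⟩ := exists_c m n hm hn h
    set cbar : ZMod (m - 1) := (c : ZMod (m - 1)) with hcbar
    have key : ((n : ZMod (m - 1)) - 1) * cbar + sbar = 0 := by
      have hdvd := (ZMod.intCast_zmod_eq_zero_iff_dvd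
        (((n - 1 : ℕ) : ℤ) * c + ((S : ℕ) : ℤ)) (m - 1)).2 hc
      push_cast at hdvd
      rw [Nat.cast_sub (by omega : 1 ≤ n)] at hdvd
      push_cast at hdvd
      linear_combination hdvd
    have hn1 : ((n : ℕ) : ZMod (n - 1)) = 1 := by
      have hx : n = (n - 1) + 1 := by omega
      rw [hx]
      push_cast [ZMod.natCast_self]
      ring
    set f : ZMod (m - 1) × ℤ →+ ZMod (m - 1) × ZMod (n - 1) :=
      AddMonoidHom.mk' (fun x => (x.1 + (x.2 : ZMod (m - 1)) * cbar, (x.2 : ZMod (n - 1))))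
        (by
          intro x y
          simp only [Prod.fst_add, Prod.snd_add, Prod.mk_add_mk, Prod.mk.injEq]
          constructor
          · push_cast; ring
          · push_cast; ring) with hf
    have hfapply : ∀ x : ZMod (m - 1) × ℤ,
        f x = (x.1 + (x.2 : ZMod (m - 1)) * cbar, (x.2 : ZMod (n - 1))) := fun x => rfl
    have hsurj : Function.Surjective f := by
      rintro ⟨a, b⟩
      obtain ⟨k, hk⟩ := ZMod.intCast_surjective b
      refine ⟨(a - (k : ZMod (m - 1)) * cbar, k), ?_⟩
      rw [hfapply]
      simp [hk]
    have hker : (AddMonoidHom.id (ZMod (m - 1) × ℤ) - Φ).range = f.ker := by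
      ext x
      constructor
      · rintro ⟨⟨a, k⟩, rfl⟩
        rw [AddMonoidHom.mem_ker, AddMonoidHom.sub_apply, AddMonoidHom.id_apply, hΦ]
        rw [hfapply]
        have hx0 : (0 : ZMod (m - 1) × ZMod (n - 1)) = (0, 0) := rfl
        rw [hx0, Prod.mk_sub_mk, Prod.mk.injEq]
        constructor
        · push_cast
          have hz : (k : ZMod (m - 1)) • sbar = (k : ZMod (m - 1)) * sbar := rfl
          rw [zsmul_eq_mul]
          linear_combination (-(k : ZMod (m - 1))) * key
        · push_cast
          rw [hn1]
          ring
      · intro hx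
        rw [AddMonoidHom.mem_ker, hfapply] at hx
        have hx0 : (0 : ZMod (m - 1) × ZMod (n - 1)) = (0, 0) := rfl
        rw [hx0, Prod.mk.injEq] at hx
        obtain ⟨h1, h2⟩ := hx
        have hdvd : ((n - 1 : ℕ) : ℤ) ∣ x.2 :=
          (ZMod.intCast_zmod_eq_zero_iff_dvd x.2 (n - 1)).1 h2
        obtain ⟨j, hj⟩ := hdvd
        refine ⟨(0, -j), ?_⟩
        rw [AddMonoidHom.sub_apply, AddMonoidHom.id_apply, hΦ]
        have hN : ((n - 1 : ℕ) : ℤ) = (n : ℤ) - 1 := by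
          push_cast [Nat.cast_sub (by omega : 1 ≤ n)]; ring
        refine Prod.ext ?_ ?_
        · show (0 : ZMod (m - 1)) - (0 + (-j) • sbar) = x.1
          rw [zsmul_eq_mul]
          have hx1 : x.1 = -((x.2 : ZMod (m - 1)) * cbar) := by linear_combination h1
          rw [hx1, hj, hN]
          push_cast
          linear_combination ((j : ZMod (m - 1))) * key
        · show (-j : ℤ) - (n : ℤ) * (-j) = x.2
          rw [hj, hN]
          ring
    exact ⟨(QuotientAddGroup.quotientAddEquivOfEq hker).trans
      (QuotientAddGroup.quotientKerEquivOfSurjective f hsurj)⟩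
end

section
/- Let $X$ be a topological space with a basis of compact open sets, let $U \subseteq X$ be an open subspace and $C = X \setminus U$ its closed complement. For an abelian group $A$, let $AX$ denote the group of functions $X \to A$ spanned by $a \cdot 1_W$ for $W \subseteq X$ compact open. Then the sequence $0 \to AU \to AX \to AC \to 0$ is exact, where $AU \to AX$ is extension by zero and $AX \to AC$ is restriction of functions. -/
open Set

/-- The generators of `AX`: functions `a·1_W` for `W ⊆ X` compact open (compactness
includes the Hausdorff axiom, expressed as `T2Space W`), with `W` contained in a
given set `S`. -/
def indicatorGens (X : Type*) [TopologicalSpace X] (A : Type*) [AddCommGroup A]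
    (S : Set X) : AddSubgroup (X → A) :=
  AddSubgroup.closure {f : X → A | ∃ (a : A) (W : Set X), W ⊆ S ∧ IsOpen W ∧
    IsCompact W ∧ T2Space W ∧ f = W.indicator fun _ => a}

/-- The group `AC` of functions on the closed complement `C = X \ U`, spanned by
`a·1_V` for `V ⊆ C` compact, Hausdorff, open in `C`, and contained in some open
Hausdorff subspace of `X`. -/
def restrictedGens (X : Type*) [TopologicalSpace X] (A : Type*) [AddCommGroup A]
    (U : Set X) : AddSubgroup (↥(Uᶜ) → A) :=
  AddSubgroup.closure {g : ↥(Uᶜ) → A | ∃ (a : A) (V : Set X), V ⊆ Uᶜ ∧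
    IsCompact V ∧ T2Space V ∧ (∃ O : Set X, IsOpen O ∧ V = O ∩ Uᶜ) ∧
    (∃ H : Set X, IsOpen H ∧ T2Space H ∧ V ⊆ H) ∧
    g = fun x : ↥(Uᶜ) => V.indicator (fun _ => a) (x : X)}

section Aux

variable {X : Type*} [TopologicalSpace X] {A : Type*} [AddCommGroup A]

/-- compact open Hausdorff -/
def AuxCOH {X : Type*} [TopologicalSpace X] (W : Set X) : Prop :=
  IsOpen W ∧ IsCompact W ∧ T2Space W

lemma aux_t2_subset {S T : Set X} (hST : S ⊆ T) (h : T2Space T) : T2Space S :=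
  @Topology.IsEmbedding.t2Space _ _ _ _ h _ (Topology.IsEmbedding.inclusion hST)

lemma aux_open_diff_of_ambient {H Q : Set X} (hHo : IsOpen H) (hHt2 : T2Space H)
    (hQH : Q ⊆ H) (hQc : IsCompact Q) : IsOpen (H \ Q) := by
  haveI := hHt2
  have h1 : IsCompact ((↑) ⁻¹' Q : Set ↥H) := by
    rw [Topology.IsEmbedding.subtypeVal.isCompact_iff]
    rwa [Subtype.image_preimage_coe, inter_eq_self_of_subset_right hQH]
  have h2 : IsOpen (((↑) ⁻¹' Q : Set ↥H)ᶜ) := h1.isClosed.isOpen_compl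
  have h3 := hHo.isOpenMap_subtype_val _ h2
  have : (Subtype.val '' (((↑) ⁻¹' Q : Set ↥H)ᶜ)) = H \ Q := by
    ext x
    simp only [mem_image, mem_compl_iff, mem_preimage, mem_diff, Subtype.exists,
      exists_and_right, exists_eq_right]
    exact ⟨fun ⟨hx, hq⟩ => ⟨hx, hq⟩, fun ⟨hx, hq⟩ => ⟨hx, hq⟩⟩
  rwa [this] at h3

lemma aux_coh_diff {H P Q : Set X} (hHo : IsOpen H) (hHt2 : T2Space H)
    (hPH : P ⊆ H) (hQH : Q ⊆ H) (hP : AuxCOH P) (hQo : IsOpen Q) (hQc : IsCompact Q) :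
    AuxCOH (P \ Q) := by
  refine ⟨?_, hP.2.1.diff hQo, aux_t2_subset diff_subset hP.2.2⟩
  have : P \ Q = P ∩ (H \ Q) := by
    ext x; exact ⟨fun ⟨h1, h2⟩ => ⟨h1, hPH h1, h2⟩, fun ⟨h1, _, h2⟩ => ⟨h1, h2⟩⟩
  rw [this]
  exact hP.1.inter (aux_open_diff_of_ambient hHo hHt2 hQH hQc)

lemma aux_inner_lemma (U : Set X) (n : ℕ)
    (IH : ∀ (c : Fin n → A) (W : Fin n → Set X), (∀ i, AuxCOH (W i)) →
      (∀ x ∈ Uᶜ, (∑ i, (W i).indicator fun _ => c i) x = 0) →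
      (∑ i, (W i).indicator fun _ => c i) ∈ indicatorGens X A U) :
    ∀ (k : ℕ) (c : Fin (n+1) → A) (W : Fin (n+1) → Set X) (N : Fin k → Set X)
      (I : Fin k → Finset (Fin (n+1))),
      (∀ i, AuxCOH (W i)) →
      (∀ x ∈ Uᶜ, (∑ i, (W i).indicator fun _ => c i) x = 0) →
      (∀ j, AuxCOH (N j)) →
      (∀ j, (0 : Fin (n+1)) ∈ I j) →
      (∀ j, ∑ i ∈ I j, c i = 0) →
      (∀ j, ∀ i ∈ I j, N j ⊆ W i) →
      (W 0 ∩ Uᶜ ⊆ ⋃ j, N j) →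
      (∑ i, (W i).indicator fun _ => c i) ∈ indicatorGens X A U := by
  classical
  intro k
  induction k with
  | zero =>
    intro c W N I hW hvan hN h0 hsum hNW hcov
    have hW0U : W 0 ⊆ U := by
      intro x hx
      by_contra hxu
      have := hcov ⟨hx, hxu⟩
      simp at this
    have hhead : ((W 0).indicator fun _ => c 0) ∈ indicatorGens X A U :=
      AddSubgroup.subset_closure ⟨c 0, W 0, hW0U, (hW 0).1, (hW 0).2.1, (hW 0).2.2, rfl⟩
    have hrest : (∑ i : Fin n, (W i.succ).indicator fun _ => c i.succ) ∈ indicatorGens X A U := by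
      apply IH
      · intro i; exact hW i.succ
      · intro x hx
        have h1 := hvan x hx
        rw [Fin.sum_univ_succ] at h1
        have h2 : (W 0).indicator (fun _ => c 0) x = 0 :=
          Set.indicator_of_notMem (fun hxW => hx (hW0U hxW)) _
        simpa [h2] using h1
    have := AddSubgroup.add_mem _ hhead hrest
    rwa [← Fin.sum_univ_succ (fun i => (W i).indicator fun _ => c i)] at this
  | succ k ih =>
    intro c W N I hW hvan hN h0 hsum hNW hcov
    set W' : Fin (n+1) → Set X := fun i => if i ∈ I 0 then W i \ N 0 else W i with hW'def
    have hfeq : (∑ i, (W' i).indicator fun _ => c i) = (∑ i, (W i).indicator fun _ => c i) := by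
      funext x
      simp only [Finset.sum_apply]
      by_cases hx : x ∈ N 0
      · rw [← Finset.sum_filter_add_sum_filter_not Finset.univ (· ∈ I 0),
          ← Finset.sum_filter_add_sum_filter_not Finset.univ (· ∈ I 0)
            (fun i => (W i).indicator (fun _ => c i) x)]
        congr 1
        · have e1 : ∀ i ∈ Finset.univ.filter (· ∈ I 0),
              (W' i).indicator (fun _ => c i) x = 0 := by
            intro i hi
            simp only [Finset.mem_filter] at hi
            apply Set.indicator_of_notMem
            simp only [hW'def, if_pos hi.2]
            exact fun h => h.2 hx
          have e2 : ∀ i ∈ Finset.univ.filter (· ∈ I 0),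
              (W i).indicator (fun _ => c i) x = c i := by
            intro i hi
            simp only [Finset.mem_filter] at hi
            exact Set.indicator_of_mem (hNW 0 i hi.2 hx) _
          rw [Finset.sum_congr rfl e1, Finset.sum_congr rfl e2]
          rw [Finset.filter_univ_mem]
          simp [hsum 0]
        · apply Finset.sum_congr rfl
          intro i hi
          simp only [Finset.mem_filter] at hi
          simp only [hW'def, if_neg hi.2]
      · apply Finset.sum_congr rfl
        intro i _
        by_cases hi : i ∈ I 0
        · simp only [hW'def, if_pos hi]
          by_cases hxW : x ∈ W i
          · rw [Set.indicator_of_mem (show x ∈ W i \ N 0 from ⟨hxW, hx⟩),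
              Set.indicator_of_mem hxW]
          · rw [Set.indicator_of_notMem (fun h => hxW h.1),
              Set.indicator_of_notMem hxW]
        · simp only [hW'def, if_neg hi]
    rw [← hfeq]
    apply ih c W' (fun j => N j.succ \ N 0) (fun j => I j.succ)
    · intro i
      by_cases hi : i ∈ I 0
      · simp only [hW'def, if_pos hi]
        exact aux_coh_diff (hW i).1 (hW i).2.2 (subset_refl _) (hNW 0 i hi) (hW i)
          (hN 0).1 (hN 0).2.1
      · simpa only [hW'def, if_neg hi] using hW i
    · intro x hx; rw [hfeq]; exact hvan x hx
    · intro j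
      exact aux_coh_diff (hW 0).1 (hW 0).2.2 (hNW j.succ 0 (h0 j.succ)) (hNW 0 0 (h0 0))
        (hN j.succ) (hN 0).1 (hN 0).2.1
    · intro j; exact h0 j.succ
    · intro j; exact hsum j.succ
    · intro j i hi y hy
      have hyW : y ∈ W i := hNW j.succ i hi hy.1
      by_cases hi0 : i ∈ I 0
      · simp only [hW'def, if_pos hi0]; exact ⟨hyW, hy.2⟩
      · simpa only [hW'def, if_neg hi0] using hyW
    · intro y hy
      have hyW'0 : y ∈ W 0 \ N 0 := by
        have := hy.1
        simpa only [hW'def, if_pos (h0 0)] using this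
      have : y ∈ ⋃ j, N j := hcov ⟨hyW'0.1, hy.2⟩
      obtain ⟨j, hj⟩ := mem_iUnion.1 this
      refine mem_iUnion.2 ?_
      rcases Fin.eq_zero_or_eq_succ j with h | ⟨j', rfl⟩
      · exact absurd (h ▸ hj) hyW'0.2
      · exact ⟨j', hj, hyW'0.2⟩

lemma aux_key_lemma
    (hbasis : ∀ (x : X) (O : Set X), IsOpen O → x ∈ O →
      ∃ W : Set X, IsOpen W ∧ IsCompact W ∧ T2Space W ∧ x ∈ W ∧ W ⊆ O)
    (U : Set X) (hU : IsOpen U) (n : ℕ) :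
    ∀ (c : Fin n → A) (W : Fin n → Set X), (∀ i, AuxCOH (W i)) →
      (∀ x ∈ Uᶜ, (∑ i, (W i).indicator fun _ => c i) x = 0) →
      (∑ i, (W i).indicator fun _ => c i) ∈ indicatorGens X A U := by
  classical
  induction n with
  | zero =>
    intro c W _ _
    simp only [Finset.univ_eq_empty, Finset.sum_empty]
    exact AddSubgroup.zero_mem _
  | succ n IH =>
    intro c W hW hvan
    set K := W 0 ∩ Uᶜ with hKdef
    have hKc : IsCompact K := (hW 0).2.1.inter_right hU.isClosed_compl
    set T : X → Finset (Fin (n+1)) := fun x => Finset.univ.filter (x ∈ W ·) with hTdef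
    have hchoice : ∀ x : ↥K, ∃ M : Set X, IsOpen M ∧ IsCompact M ∧ T2Space M ∧
        (x : X) ∈ M ∧ M ⊆ ⋂ i ∈ T (x : X), W i := by
      intro x
      apply hbasis
      · exact isOpen_biInter_finset (fun i _ => (hW i).1)
      · refine mem_iInter₂.2 fun i hi => ?_
        exact (Finset.mem_filter.1 hi).2
    choose N hNo hNc hNt2 hNx hNsub using hchoice
    have hcover : K ⊆ ⋃ x : ↥K, N x := fun y hy => mem_iUnion.2 ⟨⟨y, hy⟩, hNx _⟩
    obtain ⟨t, ht⟩ := hKc.elim_finite_subcover (fun x : ↥K => N x) hNo hcover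
    set e := t.equivFin with hedef
    have hT0 : ∀ x : ↥K, (0 : Fin (n+1)) ∈ T (x : X) :=
      fun x => Finset.mem_filter.2 ⟨Finset.mem_univ _, x.2.1⟩
    have hTsum : ∀ x : ↥K, ∑ i ∈ T (x : X), c i = 0 := by
      intro x
      have h1 := hvan (x : X) x.2.2
      rw [Finset.sum_apply] at h1
      rw [← h1]
      rw [Finset.sum_filter]
      apply Finset.sum_congr rfl
      intro i _
      rw [Set.indicator_apply]
    apply aux_inner_lemma U n IH t.card c W (fun j => N (e.symm j : ↥t))
      (fun j => T ((e.symm j : ↥t) : X))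
    · exact hW
    · exact hvan
    · intro j; exact ⟨hNo _, hNc _, hNt2 _⟩
    · intro j; exact hT0 _
    · intro j; exact hTsum _
    · intro j i hi y hy
      exact mem_iInter₂.1 (hNsub _ hy) i hi
    · intro y hy
      have := ht hy
      obtain ⟨x, hx⟩ := mem_iUnion.1 this
      simp only [mem_iUnion, exists_prop] at hx
      refine mem_iUnion.2 ⟨e ⟨x, hx.1⟩, ?_⟩
      simpa only [Equiv.symm_apply_apply] using hx.2

omit [TopologicalSpace X] in
lemma aux_indicator_neg_const (W : Set X) (a : A) :
    (-(W.indicator fun _ => a)) = W.indicator fun _ => -a := by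
  funext x
  by_cases h : x ∈ W <;> simp [Set.indicator_apply, h]

lemma aux_repr_lemma {f : X → A} (hf : f ∈ indicatorGens X A Set.univ) :
    ∃ (n : ℕ) (c : Fin n → A) (W : Fin n → Set X), (∀ i, AuxCOH (W i)) ∧
      f = ∑ i, (W i).indicator fun _ => c i := by
  refine AddSubgroup.closure_induction ?_ ?_ ?_ ?_ hf
  · rintro g ⟨a, W, -, ho, hc, ht, rfl⟩
    exact ⟨1, fun _ => a, fun _ => W, fun _ => ⟨ho, hc, ht⟩, by simp [Fin.sum_univ_one]⟩
  · exact ⟨0, Fin.elim0, Fin.elim0, fun i => i.elim0, by simp⟩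
  · rintro g h - - ⟨n, c, W, hW, rfl⟩ ⟨m, d, V, hV, rfl⟩
    refine ⟨n + m, Fin.append c d, Fin.append W V, ?_, ?_⟩
    · intro i
      refine Fin.addCases (fun i => ?_) (fun i => ?_) i
      · simpa only [Fin.append_left] using hW i
      · simpa only [Fin.append_right] using hV i
    · rw [Fin.sum_univ_add]
      simp only [Fin.append_left, Fin.append_right]
  · rintro g - ⟨n, c, W, hW, rfl⟩
    refine ⟨n, fun i => -(c i), W, hW, ?_⟩
    rw [← Finset.sum_neg_distrib]
    exact Finset.sum_congr rfl fun i _ => aux_indicator_neg_const _ _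

end Aux

/-- Let `X` be a space with a basis of compact open (Hausdorff) sets, `U ⊆ X` open
with closed complement `C`, and `A` an abelian group. Then
`0 → AU → AX → AC → 0` is exact, where `AU → AX` is the inclusion (extension by
zero) and `AX → AC` is restriction of functions. -/
theorem stmt_19 {X : Type*} [TopologicalSpace X] (A : Type*) [AddCommGroup A]
    (hbasis : ∀ (x : X) (O : Set X), IsOpen O → x ∈ O →
      ∃ W : Set X, IsOpen W ∧ IsCompact W ∧ T2Space W ∧ x ∈ W ∧ W ⊆ O)
    (U : Set X) (hU : IsOpen U)
    (res : (X → A) →+ (↥(Uᶜ) → A)) (hres : ∀ (f : X → A) (x : ↥(Uᶜ)), res f x = f x) :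
    indicatorGens X A U ≤ indicatorGens X A Set.univ ∧
    (∀ f ∈ indicatorGens X A Set.univ, res f ∈ restrictedGens X A U) ∧
    (∀ f ∈ indicatorGens X A Set.univ, (res f = 0 ↔ f ∈ indicatorGens X A U)) ∧
    (∀ g ∈ restrictedGens X A U, ∃ f ∈ indicatorGens X A Set.univ, res f = g) := by
  classical
  -- (3 ⟸): elements of AU restrict to zero
  have hAUker : ∀ f ∈ indicatorGens X A U, res f = 0 := by
    intro f hf
    refine AddSubgroup.closure_induction ?_ ?_ ?_ ?_ hf
    · rintro g ⟨a, W, hWU, -, -, -, rfl⟩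
      funext x
      rw [hres]
      exact Set.indicator_of_notMem (fun hxW => x.2 (hWU hxW)) _
    · exact map_zero res
    · intro g h _ _ ihg ihh
      rw [map_add, ihg, ihh, add_zero]
    · intro g _ ihg
      rw [map_neg, ihg, neg_zero]
  refine ⟨?_, ?_, ?_, ?_⟩
  · -- Part 1: AU ≤ AX
    apply AddSubgroup.closure_mono
    rintro f ⟨a, W, hWU, ho, hc, ht, rfl⟩
    exact ⟨a, W, Set.subset_univ W, ho, hc, ht, rfl⟩
  · -- Part 2: res maps AX into AC
    intro f hf
    refine AddSubgroup.closure_induction ?_ ?_ ?_ ?_ hf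
    · rintro g ⟨a, W, -, ho, hc, ht, rfl⟩
      apply AddSubgroup.subset_closure
      refine ⟨a, W ∩ Uᶜ, Set.inter_subset_right, hc.inter_right hU.isClosed_compl,
        aux_t2_subset Set.inter_subset_left ht, ⟨W, ho, rfl⟩,
        ⟨W, ho, ht, Set.inter_subset_left⟩, ?_⟩
      funext x
      rw [hres]
      by_cases hx : (x : X) ∈ W
      · rw [Set.indicator_of_mem hx, Set.indicator_of_mem (show (x : X) ∈ W ∩ Uᶜ from ⟨hx, x.2⟩)]
      · rw [Set.indicator_of_notMem hx, Set.indicator_of_notMem (fun h => hx h.1)]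
    · rw [map_zero]; exact AddSubgroup.zero_mem _
    · intro g h _ _ ihg ihh
      rw [map_add]; exact AddSubgroup.add_mem _ ihg ihh
    · intro g _ ihg
      rw [map_neg]; exact AddSubgroup.neg_mem _ ihg
  · -- Part 3: exactness at AX
    intro f hf
    constructor
    · intro h0
      obtain ⟨n, c, W, hW, rfl⟩ := aux_repr_lemma hf
      apply aux_key_lemma hbasis U hU n c W hW
      intro x hx
      have h2 := hres (∑ i, (W i).indicator fun _ => c i) ⟨x, hx⟩
      rw [h0] at h2
      exact h2.symm
    · intro hfU
      exact hAUker f hfU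
  · -- Part 4: surjectivity onto AC
    intro g hg
    refine AddSubgroup.closure_induction ?_ ?_ ?_ ?_ hg
    · rintro g ⟨a, V, hVC, hVc, hVt2, ⟨O, hO, hVO⟩, ⟨H, hH, hHt2, hVH⟩, rfl⟩
      have hchoice : ∀ x : ↥V, ∃ M : Set X, IsOpen M ∧ IsCompact M ∧ T2Space M ∧
          (x : X) ∈ M ∧ M ⊆ O ∩ H := by
        intro x
        apply hbasis _ _ (hO.inter hH)
        have hxO : (x : X) ∈ O ∩ Uᶜ := by rw [← hVO]; exact x.2
        exact ⟨hxO.1, hVH x.2⟩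
      choose N hNo hNc hNt2 hNx hNsub using hchoice
      have hcover : V ⊆ ⋃ x : ↥V, N x := fun y hy => mem_iUnion.2 ⟨⟨y, hy⟩, hNx _⟩
      obtain ⟨t, ht⟩ := hVc.elim_finite_subcover (fun x : ↥V => N x) hNo hcover
      set W : Set X := ⋃ x ∈ t, N x with hWdef
      have hWO : W ⊆ O ∩ H := by
        intro y hy
        obtain ⟨x, hx⟩ := mem_iUnion.1 hy
        simp only [mem_iUnion, exists_prop] at hx
        exact hNsub _ hx.2
      have hWcoh : IsOpen W ∧ IsCompact W ∧ T2Space W :=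
        ⟨isOpen_biUnion fun x _ => hNo x, t.isCompact_biUnion fun x _ => hNc x,
          aux_t2_subset (fun y hy => (hWO hy).2) hHt2⟩
      refine ⟨W.indicator fun _ => a,
        AddSubgroup.subset_closure ⟨a, W, Set.subset_univ _, hWcoh.1, hWcoh.2.1,
          hWcoh.2.2, rfl⟩, ?_⟩
      funext x
      rw [hres]
      by_cases hx : (x : X) ∈ V
      · rw [Set.indicator_of_mem hx, Set.indicator_of_mem (ht hx)]
      · rw [Set.indicator_of_notMem hx]
        refine Set.indicator_of_notMem (fun hxW => hx ?_) _
        rw [hVO]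
        exact ⟨(hWO hxW).1, x.2⟩
    · exact ⟨0, AddSubgroup.zero_mem _, map_zero res⟩
    · rintro g h _ _ ⟨f1, hf1, rfl⟩ ⟨f2, hf2, rfl⟩
      exact ⟨f1 + f2, AddSubgroup.add_mem _ hf1 hf2, map_add res f1 f2⟩
    · rintro g _ ⟨f1, hf1, rfl⟩
      exact ⟨-f1, AddSubgroup.neg_mem _ hf1, map_neg res f1⟩
end
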